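/- arXiv:2410.04179 — 4 statements merged into one kernel-verified Lean document; each statement's English description precedes it below -/
import Mathlib

section
/- Let h be a histogram over A and D = k-lists. There exists a fixed-point decision for h in D if and only if the automorphism partition of h contains at least k singleton classes. -/
/-- A histogram `h` admits a fixed-point decision among `k`-lists iff its
automorphism partition contains at least `k` singleton classes. -/
theorem stmt4 {α E : Type*} [Fintype α] [MulAction (Equiv.Perm α) E]
    (h : E → ℕ) (k : ℕ) (hk : k ≤ Fintype.card α) :
    (∃ d : Fin k ↪ α,
      ∀ σ : Equiv.Perm α, (fun R => h (σ⁻¹ • R)) = h → ∀ i, σ (d i) = d i) ↔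
    k ≤ {a : α |
      {b : α | ∃ σ : Equiv.Perm α, (fun R => h (σ⁻¹ • R)) = h ∧ σ a = b}
        = {a}}.ncard := by
  classical
  set S : Set α := {a : α |
      {b : α | ∃ σ : Equiv.Perm α, (fun R => h (σ⁻¹ • R)) = h ∧ σ a = b}
        = {a}} with hS
  have hmem : ∀ a : α, a ∈ S ↔
      ∀ σ : Equiv.Perm α, (fun R => h (σ⁻¹ • R)) = h → σ a = a := by
    intro a
    constructor
    · intro ha σ hσ
      have : σ a ∈ ({a} : Set α) := by
        rw [← ha]; exact ⟨σ, hσ, rfl⟩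
      simpa using this
    · intro ha
      ext b
      simp only [hS, Set.mem_setOf_eq, Set.mem_singleton_iff]
      constructor
      · rintro ⟨σ, hσ, rfl⟩; exact ha σ hσ
      · rintro rfl
        refine ⟨1, ?_, rfl⟩
        funext R; simp
  constructor
  · rintro ⟨d, hd⟩
    have hinj : Function.Injective (fun i : Fin k => (⟨d i, (hmem (d i)).2
        (fun σ hσ => hd σ hσ i)⟩ : S)) := by
      intro i j hij
      exact d.injective (congrArg Subtype.val hij)
    calc k = Nat.card (Fin k) := by simp
      _ ≤ Nat.card S := Nat.card_le_card_of_injective _ hinj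
      _ = S.ncard := Nat.card_coe_set_eq S
  · intro hcard
    have : Fintype.card (Fin k) ≤ Fintype.card S := by
      rw [Fintype.card_fin]
      rw [Set.ncard_eq_toFinset_card'] at hcard
      rwa [Set.toFinset_card] at hcard
    obtain ⟨e⟩ := Function.Embedding.nonempty_of_card_le this
    refine ⟨e.trans (Function.Embedding.subtype _), ?_⟩
    intro σ hσ i
    exact (hmem (e i)).1 (e i).2 σ hσ
end

section
/- A profile P is ANR-possible (there exists a resolute rule satisfying anonymity, neutrality, and resolvability at P) if and only if Hist(P) has a fixed-point decision, i.e., a decision d with σ(d) = d for every automorphism σ of Hist(P). -/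
/-- The histogram of a profile: the number of occurrences of each preference. -/
def Hist {E : Type*} [DecidableEq E] {n : ℕ} (P : Fin n → E) : E → ℕ :=
  fun R => (Finset.univ.filter (fun i => P i = R)).card

lemma Hist_smul {α E : Type*} [DecidableEq E] [MulAction (Equiv.Perm α) E] {n : ℕ}
    (P : Fin n → E) (σ : Equiv.Perm α) :
    Hist (fun i => σ • P i) = fun R => Hist P (σ⁻¹ • R) := by
  funext R
  unfold Hist
  congr 1
  apply Finset.filter_congr
  intro i _
  simp [smul_eq_iff_eq_inv_smul]

/-- A profile `P` is ANR-possible (some resolute rule satisfies anonymity and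
neutrality at `P`) iff `Hist P` has a fixed-point decision. -/
theorem stmt15 {α E D : Type*} [DecidableEq E]
    [MulAction (Equiv.Perm α) E] [MulAction (Equiv.Perm α) D] {n : ℕ}
    (P : Fin n → E) :
    (∃ r : (Fin n → E) → D,
      (∀ P' : Fin n → E, Hist P' = Hist P → r P' = r P) ∧
      (∀ σ : Equiv.Perm α, r (fun i => σ • P i) = σ • r P)) ↔
    (∃ d : D, ∀ σ : Equiv.Perm α,
      (fun R => Hist P (σ⁻¹ • R)) = Hist P → σ • d = d) := by
  constructor
  · rintro ⟨r, hanon, hneut⟩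
    refine ⟨r P, fun σ hσ => ?_⟩
    have h1 : Hist (fun i => σ • P i) = Hist P := (Hist_smul P σ).trans hσ
    have := hanon _ h1
    rwa [hneut σ] at this
  · rintro ⟨d, hd⟩
    classical
    -- key: if two translates of P have equal histograms, the corresponding translates of d agree
    have key : ∀ σ σ' : Equiv.Perm α,
        Hist (fun i => σ • P i) = Hist (fun i => σ' • P i) → σ • d = σ' • d := by
      intro σ σ' h
      rw [Hist_smul, Hist_smul] at h
      have hτ : (fun R => Hist P ((σ'⁻¹ * σ)⁻¹ • R)) = Hist P := by
        funext R
        have := congrFun h (σ' • R)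
        simpa [mul_smul] using this
      have := hd (σ'⁻¹ * σ) hτ
      rw [mul_smul] at this
      calc σ • d = σ' • (σ'⁻¹ • (σ • d)) := by rw [smul_inv_smul]
        _ = σ' • d := by rw [this]
    refine ⟨fun P' =>
      if h : ∃ σ : Equiv.Perm α, Hist P' = Hist (fun i => σ • P i) then h.choose • d else d,
      ?_, ?_⟩
    · intro P' hP'
      have h1 : ∃ σ : Equiv.Perm α, Hist P' = Hist (fun i => σ • P i) :=
        ⟨1, by simpa [one_smul] using hP'⟩
      have h2 : ∃ σ : Equiv.Perm α, Hist P = Hist (fun i => σ • P i) :=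
        ⟨1, by simp [one_smul]⟩
      simp only [dif_pos h1, dif_pos h2]
      have e1 : h1.choose • d = (1 : Equiv.Perm α) • d :=
        key _ _ (by rw [← h1.choose_spec]; simpa [one_smul] using hP')
      have e2 : h2.choose • d = (1 : Equiv.Perm α) • d :=
        key _ _ (by rw [← h2.choose_spec]; simp [one_smul])
      rw [e1, e2]
    · intro σ
      have h1 : ∃ σ' : Equiv.Perm α, Hist (fun i => σ • P i) = Hist (fun i => σ' • P i) :=
        ⟨σ, rfl⟩
      have h2 : ∃ σ' : Equiv.Perm α, Hist P = Hist (fun i => σ' • P i) :=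
        ⟨1, by simp [one_smul]⟩
      simp only [dif_pos h1, dif_pos h2]
      have e1 : h1.choose • d = σ • d := key _ _ (h1.choose_spec.symm)
      have e2 : h2.choose • d = (1 : Equiv.Perm α) • d :=
        key _ _ (by rw [← h2.choose_spec]; simp [one_smul])
      rw [e1, e2, smul_smul, mul_one]
end

section
/- For any m' ∈ ℕ and 1 ≤ ℓ' < m', there exists a multiset P' of ℓ'-element subsets of an m'-element alternative set, of size at most (m')², such that all m' alternatives receive pairwise distinct approval counts (where alternative a's approval count is the number of sets in P' containing a). -/
namespace Stmt16

def q (m : ℕ) : ℕ := (m * (m - 1) / 2) / m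
def u (m : ℕ) : ℕ := (m * (m - 1) / 2) % m
def t (m l : ℕ) : ℕ := l * m - q m
def c (m l a : ℕ) : ℕ := if a = 0 then t m l - u m else t m l + a
def s (m l a : ℕ) : ℕ := ∑ b ∈ Finset.range a, c m l b

lemma key (m : ℕ) : m * q m + u m = m * (m - 1) / 2 := Nat.div_add_mod _ _

lemma twoS0 (m : ℕ) : m * (m - 1) / 2 * 2 = m * (m - 1) := by
  have he : Even (m * (m - 1)) := by
    rcases m with _ | k
    · simp
    · have := Nat.even_mul_succ_self k
      simpa [Nat.succ_sub_one, mul_comm] using this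
  exact Nat.div_mul_cancel he.two_dvd

lemma hq (m : ℕ) (hm : 1 ≤ m) : 2 * q m ≤ m - 1 := by
  have h1 : m * q m ≤ m * (m - 1) / 2 := by have := key m; omega
  have h2 : m * (2 * q m) ≤ m * (m - 1) := by
    have := twoS0 m
    calc m * (2 * q m) = m * q m * 2 := by ring
    _ ≤ m * (m - 1) / 2 * 2 := by omega
    _ = m * (m - 1) := twoS0 m
  exact Nat.le_of_mul_le_mul_left h2 hm

lemma h2u (m : ℕ) (hm : 1 ≤ m) : 2 * u m ≤ m := by
  have hq' := hq m hm
  have e : 2 * u m = m * ((m - 1) - 2 * q m) := by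
    have h1 := key m
    have h2 := twoS0 m
    have h3 : m * ((m - 1) - 2 * q m) = m * (m - 1) - m * (2 * q m) :=
      Nat.mul_sub m (m-1) (2 * q m)
    have h4 : m * (2 * q m) = m * q m * 2 := by ring
    omega
  have hu : u m < m := Nat.mod_lt _ hm
  rcases Nat.lt_or_ge ((m - 1) - 2 * q m) 2 with h | h
  · interval_cases h' : ((m - 1) - 2 * q m) <;> omega
  · exfalso
    have : m * 2 ≤ m * ((m - 1) - 2 * q m) := Nat.mul_le_mul_left m h
    omega

lemma hqu (m : ℕ) (hm : 1 ≤ m) : q m + u m + 1 ≤ m := by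
  have := hq m hm
  have := h2u m hm
  omega


section
open Stmt16
variable {m l : ℕ} (hl : 1 ≤ l) (hlm : l < m)

include hl hlm

lemma m_le_lm : m ≤ l * m := Nat.le_mul_of_pos_left m hl

lemma u_le_t : u m ≤ t m l := by
  have h1 := hqu m (by omega)
  have h2 := m_le_lm hl hlm
  unfold t
  omega

lemma c_pos (a : ℕ) : 1 ≤ c m l a := by
  have h1 := hqu m (by omega)
  have h2 := m_le_lm hl hlm
  unfold c t
  split <;> omega

lemma c_lt (a : ℕ) (ha : a < m) : c m l a < m * m := by
  have h2 : (l + 1) * m ≤ m * m := Nat.mul_le_mul_right m (by omega)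
  have h3 : (l + 1) * m = l * m + m := by ring
  have h1 := hqu m (by omega)
  unfold c t
  split <;> omega

lemma c_inj {a b : ℕ} (ha : a < m) (hb : b < m) (h : c m l a = c m l b) : a = b := by
  have h1 := u_le_t hl hlm
  unfold c at h
  split at h <;> split at h <;> omega

omit hl hlm

lemma s_succ (a : ℕ) : s m l (a + 1) = s m l a + c m l a := Finset.sum_range_succ _ _

lemma s_mono : Monotone (s m l) :=
  monotone_nat_of_le_succ fun a => by rw [s_succ]; omega

include hl hlm

lemma s_strict {a b : ℕ} (h : a < b) : s m l a < s m l b := by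
  have h1 : s m l a < s m l (a + 1) := by
    have := c_pos hl hlm (m := m) a; rw [s_succ]; omega
  exact lt_of_lt_of_le h1 (s_mono h)

lemma sum_c : s m l m = l * (m * m) := by
  obtain ⟨M, rfl⟩ : ∃ M, m = M + 1 := ⟨m - 1, by omega⟩
  have hut := u_le_t hl hlm
  have hql : q (M+1) ≤ l * (M+1) := le_trans (by have := hqu (M+1) (by omega); omega)
    (m_le_lm hl hlm)
  have e1 : s (M+1) l (M+1)
      = (∑ i ∈ Finset.range M, c (M+1) l (i+1)) + c (M+1) l 0 :=
    Finset.sum_range_succ' _ _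
  have e2 : ∀ i, c (M+1) l (i+1) = t (M+1) l + (i+1) := fun i => by simp [c]
  have e3 : (∑ i ∈ Finset.range M, c (M+1) l (i+1))
      = M * t (M+1) l + (∑ i ∈ Finset.range (M+1), i) := by
    simp only [e2]
    rw [Finset.sum_add_distrib, Finset.sum_const, Finset.card_range, smul_eq_mul]
    have ha : ∑ i ∈ Finset.range M, (i + 1) = (∑ i ∈ Finset.range M, i) + M := by
      rw [Finset.sum_add_distrib, Finset.sum_const, Finset.card_range, smul_eq_mul]; omega
    have hb : ∑ i ∈ Finset.range (M+1), i = (∑ i ∈ Finset.range M, i) + M :=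
      Finset.sum_range_succ _ _
    omega
  have e4 : (∑ i ∈ Finset.range (M+1), i) = (M+1) * q (M+1) + u (M+1) := by
    rw [Finset.sum_range_id, key]
  have e5 : c (M+1) l 0 = t (M+1) l - u (M+1) := by simp [c]
  have e6 : s (M+1) l (M+1) = (M+1) * t (M+1) l + (M+1) * q (M+1) := by
    rw [e1, e3, e4, e5]
    have h9 : (M+1) * t (M+1) l = M * t (M+1) l + t (M+1) l := by ring
    omega
  rw [e6]
  unfold t
  rw [Nat.mul_sub]
  have h7 : (M+1) * (l * (M+1)) = l * ((M+1) * (M+1)) := by ring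
  have h8 : (M+1) * q (M+1) ≤ (M+1) * (l * (M+1)) := Nat.mul_le_mul_left _ hql
  omega

end


def hh (m l p : ℕ) : ℕ := Nat.findGreatest (fun a => s m l a ≤ p) m

section
variable {m l : ℕ} (hl : 1 ≤ l) (hlm : l < m)

lemma s_zero : s m l 0 = 0 := rfl

lemma hh_le_self (p : ℕ) : s m l (hh m l p) ≤ p := by
  unfold hh
  exact Nat.findGreatest_spec (P := fun a => s m l a ≤ p) (Nat.zero_le m)
    (by show s m l 0 ≤ p; rw [s_zero]; omega)

include hl hlm

lemma hh_lt {p : ℕ} (hp : p < s m l m) : hh m l p < m := by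
  rcases Nat.lt_or_ge (hh m l p) m with h | h
  · exact h
  · exfalso
    have h1 : hh m l p = m := le_antisymm (Nat.findGreatest_le m) h
    have := hh_le_self (m := m) (l := l) p
    rw [h1] at this
    omega

lemma hh_ub {p : ℕ} (hp : p < s m l m) : p < s m l (hh m l p + 1) := by
  have h1 := hh_lt hl hlm hp
  by_contra hcon
  push_neg at hcon
  have h2 := Nat.findGreatest_is_greatest (P := fun a => s m l a ≤ p) (n := m)
      (k := hh m l p + 1) (by unfold hh; omega) (by omega)
  exact h2 hcon

lemma hh_eq {a p : ℕ} (ha : a < m) (h1 : s m l a ≤ p) (h2 : p < s m l (a + 1)) :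
    hh m l p = a := by
  have hpm : p < s m l m := lt_of_lt_of_le h2 (s_mono (by omega))
  have hle : a ≤ hh m l p := Nat.le_findGreatest (by omega) h1
  have hge : hh m l p ≤ a := by
    by_contra h
    have : s m l (a + 1) ≤ s m l (hh m l p) := s_mono (by omega)
    have := hh_le_self (m := m) (l := l) p
    omega
  omega

end

/-- the `j`-th vote, in `Fin (M+1)` -/
def V (M l j : ℕ) : Finset (Fin (M + 1)) :=
  (Finset.range l).image fun k =>
    (⟨hh (M+1) l (j + k * ((M+1) * (M+1))) % (M+1), Nat.mod_lt _ M.succ_pos⟩ : Fin (M+1))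

section
variable {M l : ℕ} (hl : 1 ≤ l) (hlm : l < M + 1)

/-- auxiliary: mod-injectivity on short intervals -/
lemma mod_inj {x y n : ℕ} (hxy : x ≤ y) (hlt : y < x + n) (h : x % n = y % n) : x = y := by
  have hd : n ∣ y - x := (Nat.modEq_iff_dvd' hxy).mp h
  have := Nat.eq_zero_of_dvd_of_lt hd (show y - x < n by omega)
  omega

include hl hlm

lemma pos_lt_total {j k : ℕ} (hj : j < (M+1) * (M+1)) (hk : k < l) :
    j + k * ((M+1) * (M+1)) < s (M+1) l (M+1) := by
  rw [sum_c hl hlm]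
  have : (k + 1) * ((M+1)*(M+1)) ≤ l * ((M+1)*(M+1)) := Nat.mul_le_mul_right _ (by omega)
  have h2 : (k + 1) * ((M+1)*(M+1)) = k * ((M+1)*(M+1)) + (M+1)*(M+1) := by ring
  omega

lemma mem_V {j : ℕ} (hj : j < (M+1) * (M+1)) (a : Fin (M+1)) :
    a ∈ V M l j ↔ ∃ p, s (M+1) l a.val ≤ p ∧ p < s (M+1) l (a.val + 1) ∧
      p % ((M+1) * (M+1)) = j := by
  set n := (M+1) * (M+1) with hn
  constructor
  · intro haV
    simp only [V, Finset.mem_image, Finset.mem_range] at haV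
    obtain ⟨k, hk, hak⟩ := haV
    set p := j + k * n with hp
    have hpt : p < s (M+1) l (M+1) := pos_lt_total hl hlm hj hk
    have hhlt : hh (M+1) l p < M + 1 := hh_lt hl hlm hpt
    have hval : hh (M+1) l p = a.val := by
      have := congrArg Fin.val hak
      simpa [Nat.mod_eq_of_lt (show hh (M+1) l (j + k * ((M+1) * (M+1))) < M + 1 from hhlt)] using this
    refine ⟨p, ?_, ?_, ?_⟩
    · rw [← hval]; exact hh_le_self p
    · rw [← hval]; exact hh_ub hl hlm hpt
    · rw [hp, Nat.add_mul_mod_self_right, Nat.mod_eq_of_lt hj]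
  · rintro ⟨p, hp1, hp2, hp3⟩
    have hpt : p < s (M+1) l (M+1) := lt_of_lt_of_le hp2 (s_mono (by omega))
    have hnpos : 0 < n := by positivity
    have hkl : p / n < l := by
      rw [Nat.div_lt_iff_lt_mul hnpos]
      calc p < s (M+1) l (M+1) := hpt
      _ = l * n := sum_c hl hlm
      _ = l * n := rfl
    have hpe : j + (p / n) * n = p := by
      have := Nat.mod_add_div' p n
      omega
    have hha : hh (M+1) l p = a.val := hh_eq hl hlm a.isLt hp1 hp2
    simp only [V, Finset.mem_image, Finset.mem_range]
    refine ⟨p / n, hkl, ?_⟩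
    apply Fin.ext
    simp only [← hn, hpe, hha, Nat.mod_eq_of_lt a.isLt]

lemma card_V {j : ℕ} (hj : j < (M+1) * (M+1)) : (V M l j).card = l := by
  rw [V, Finset.card_image_of_injOn, Finset.card_range]
  intro k1 hk1 k2 hk2 heq
  simp only [Finset.coe_range, Set.mem_Iio] at hk1 hk2
  have hv' := congrArg Fin.val heq
  simp only at hv'
  have ht1 : j + k1 * ((M+1) * (M+1)) < s (M+1) l (M+1) := pos_lt_total hl hlm hj hk1
  have ht2 : j + k2 * ((M+1) * (M+1)) < s (M+1) l (M+1) := pos_lt_total hl hlm hj hk2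
  have hl1 := hh_lt hl hlm ht1
  have hl2 := hh_lt hl hlm ht2
  rw [Nat.mod_eq_of_lt hl1, Nat.mod_eq_of_lt hl2] at hv'
  have hb1 := hh_le_self (m := M+1) (l := l) (j + k1 * ((M+1) * (M+1)))
  have hb2 := hh_ub hl hlm ht1
  have hb3 : s (M+1) l (hh (M+1) l (j + k1 * ((M+1) * (M+1)))) ≤ j + k2 * ((M+1) * (M+1)) := by
    rw [hv']; exact hh_le_self _
  have hb4 : j + k2 * ((M+1) * (M+1)) <
      s (M+1) l (hh (M+1) l (j + k1 * ((M+1) * (M+1))) + 1) := by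
    rw [hv']; exact hh_ub hl hlm ht2
  have hca := c_lt hl hlm _ hl1
  have hss := s_succ (m := M+1) (l := l) (hh (M+1) l (j + k1 * ((M+1) * (M+1))))
  rcases Nat.lt_trichotomy k1 k2 with h | h | h
  · exfalso
    have hmul : (k1 + 1) * ((M+1) * (M+1)) ≤ k2 * ((M+1) * (M+1)) :=
      Nat.mul_le_mul_right _ (by omega)
    have h2 : (k1 + 1) * ((M+1) * (M+1)) = k1 * ((M+1) * (M+1)) + (M+1) * (M+1) := by ring
    omega
  · exact h
  · exfalso
    have hmul : (k2 + 1) * ((M+1) * (M+1)) ≤ k1 * ((M+1) * (M+1)) :=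
      Nat.mul_le_mul_right _ (by omega)
    have h2 : (k2 + 1) * ((M+1) * (M+1)) = k2 * ((M+1) * (M+1)) + (M+1) * (M+1) := by ring
    omega

end



section
variable {M l : ℕ} (hl : 1 ≤ l) (hlm : l < M + 1)
include hl hlm

lemma count_eq (a : Fin (M+1)) :
    Multiset.card (Multiset.filter (fun S => a ∈ S)
      ((Multiset.range ((M+1)*(M+1))).map (V M l))) = c (M+1) l a.val := by
  rw [Multiset.filter_map, Multiset.card_map, ← Multiset.countP_eq_card_filter,
    ← Finset.range_val]
  have hcp : Multiset.countP ((fun S => a ∈ S) ∘ V M l) (Finset.range ((M+1)*(M+1))).val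
      = (Finset.filter (fun j => a ∈ V M l j) (Finset.range ((M+1)*(M+1)))).card := by
    rw [Finset.card, Finset.filter_val, Multiset.countP_eq_card_filter]
    rfl
  rw [hcp]
  have himg : Finset.filter (fun j => a ∈ V M l j) (Finset.range ((M+1)*(M+1)))
      = (Finset.Ico (s (M+1) l a.val) (s (M+1) l (a.val+1))).image
          (· % ((M+1)*(M+1))) := by
    ext j
    simp only [Finset.mem_filter, Finset.mem_range, Finset.mem_image, Finset.mem_Ico]
    constructor
    · rintro ⟨hj, haV⟩
      obtain ⟨p, hp1, hp2, hp3⟩ := (mem_V hl hlm hj a).mp haV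
      exact ⟨p, ⟨hp1, hp2⟩, hp3⟩
    · rintro ⟨p, ⟨hp1, hp2⟩, hp3⟩
      have hnpos : 0 < (M+1)*(M+1) := by positivity
      have hj : p % ((M+1)*(M+1)) < (M+1)*(M+1) := Nat.mod_lt _ hnpos
      rw [hp3] at hj
      exact ⟨hj, (mem_V hl hlm hj a).mpr ⟨p, hp1, hp2, hp3⟩⟩
  rw [himg, Finset.card_image_of_injOn, Nat.card_Ico, s_succ]
  · omega
  · intro p1 hp1 p2 hp2 hmod
    simp only [Finset.coe_Ico, Set.mem_Ico] at hp1 hp2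
    have hca : c (M+1) l a.val < (M+1)*(M+1) := c_lt hl hlm a.val a.isLt
    have hss := s_succ (m := M+1) (l := l) a.val
    rcases le_total p1 p2 with h | h
    · exact mod_inj h (by omega) hmod
    · exact (mod_inj h (by omega) hmod.symm).symm

end

end Stmt16

/-- For any `m'` and `1 ≤ ℓ' < m'`, there is a multiset of `ℓ'`-element subsets
of an `m'`-element set, of size at most `m'²`, in which all `m'` alternatives
receive pairwise distinct approval counts. -/
theorem stmt16 (m' ℓ' : ℕ) (h1 : 1 ≤ ℓ') (h2 : ℓ' < m') :
    ∃ P' : Multiset (Finset (Fin m')),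
      (∀ S ∈ P', S.card = ℓ') ∧
      Multiset.card P' ≤ m' ^ 2 ∧
      Function.Injective
        (fun a : Fin m' =>
          Multiset.card (P'.filter (fun S => a ∈ S))) := by
  obtain ⟨M, rfl⟩ : ∃ M, m' = M + 1 := ⟨m' - 1, by omega⟩
  refine ⟨(Multiset.range ((M+1)*(M+1))).map (Stmt16.V M ℓ'), ?_, ?_, ?_⟩
  · intro S hS
    obtain ⟨j, hj, rfl⟩ := Multiset.mem_map.mp hS
    exact Stmt16.card_V h1 h2 (Multiset.mem_range.mp hj)
  · rw [Multiset.card_map, Multiset.card_range, pow_two]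
  · intro a b hab
    simp only at hab
    rw [Stmt16.count_eq h1 h2 a, Stmt16.count_eq h1 h2 b] at hab
    exact Fin.ext (Stmt16.c_inj h1 h2 a.isLt b.isLt hab)
end

section
/- Let G be a simple graph on vertex set A and let G* be obtained from G by attaching to a fixed vertex v a cycle of m+1 new vertices, each new cycle vertex connected to v, where m = |A| \ge 3. Then every automorphism of G* maps A to A, fixes v, and restricts to an automorphism of G fixing v; conversely every automorphism of G fixing v extends to an automorphism of G*. -/
/-- The graph obtained from `G` by attaching to the vertex `v` a cycle of
`m + 1` new vertices, each of which is also connected to `v`. -/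
def cycleAttach {α : Type*} (G : SimpleGraph α) (v : α) (m : ℕ) :
    SimpleGraph (α ⊕ Fin (m + 1)) :=
  SimpleGraph.fromRel (fun x y =>
    match x, y with
    | Sum.inl a, Sum.inl b => G.Adj a b
    | Sum.inl a, Sum.inr _ => a = v
    | Sum.inr _, Sum.inl _ => False
    | Sum.inr i, Sum.inr j => j = i + 1)

section CycleAttachAux

variable {α : Type*} {G : SimpleGraph α} {v : α} {m : ℕ}

lemma ca_inl_inl {a b : α} :
    (cycleAttach G v m).Adj (Sum.inl a) (Sum.inl b) ↔ G.Adj a b := by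
  simp only [cycleAttach, SimpleGraph.fromRel_adj]
  constructor
  · rintro ⟨h, h1 | h1⟩
    · exact h1
    · exact h1.symm
  · intro h; exact ⟨by simpa using h.ne, Or.inl h⟩

lemma ca_inl_inr {a : α} {i : Fin (m+1)} :
    (cycleAttach G v m).Adj (Sum.inl a) (Sum.inr i) ↔ a = v := by
  simp [cycleAttach, SimpleGraph.fromRel_adj]

lemma ca_inr_inr {i j : Fin (m+1)} :
    (cycleAttach G v m).Adj (Sum.inr i) (Sum.inr j) ↔ i ≠ j ∧ (j = i + 1 ∨ i = j + 1) := by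
  simp [cycleAttach, SimpleGraph.fromRel_adj]

lemma ncard_range_inr : (Set.range (Sum.inr : Fin (m+1) → α ⊕ Fin (m+1))).ncard = m + 1 := by
  rw [← Set.image_univ, Set.ncard_image_of_injective _ Sum.inr_injective, Set.ncard_univ]
  simp

lemma deg_v [Fintype α] : m + 1 ≤ ((cycleAttach G v m).neighborSet (Sum.inl v)).ncard := by
  have hsub : Set.range (Sum.inr : Fin (m+1) → α ⊕ Fin (m+1)) ⊆
      (cycleAttach G v m).neighborSet (Sum.inl v) := by
    rintro x ⟨i, rfl⟩
    simpa [SimpleGraph.mem_neighborSet] using (ca_inl_inr (G := G) (m := m) (i := i)).2 rfl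
  have := Set.ncard_le_ncard hsub (Set.toFinite _)
  rwa [ncard_range_inr] at this

lemma deg_inl [Fintype α] {a : α} (ha : a ≠ v) :
    ((cycleAttach G v m).neighborSet (Sum.inl a)).ncard ≤ Fintype.card α - 1 := by
  classical
  have hsub : (cycleAttach G v m).neighborSet (Sum.inl a) ⊆
      Sum.inl '' (Set.univ \ {a}) := by
    rintro x hx
    rcases x with b | i
    · have hadj : (cycleAttach G v m).Adj (Sum.inl a) (Sum.inl b) := hx
      refine ⟨b, ⟨trivial, ?_⟩, rfl⟩
      simp only [Set.mem_singleton_iff]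
      rintro rfl
      exact G.irrefl (ca_inl_inl.1 hadj)
    · have hadj : (cycleAttach G v m).Adj (Sum.inl a) (Sum.inr i) := hx
      exact absurd (ca_inl_inr.1 hadj) ha
  have := Set.ncard_le_ncard hsub (Set.toFinite _)
  refine this.trans ?_
  rw [Set.ncard_image_of_injective _ Sum.inl_injective,
    Set.ncard_diff_singleton_of_mem (Set.mem_univ a), Set.ncard_univ]
  simp

lemma deg_inr [Fintype α] {i : Fin (m+1)} :
    ((cycleAttach G v m).neighborSet (Sum.inr i)).ncard ≤ 3 := by
  have hsub : (cycleAttach G v m).neighborSet (Sum.inr i) ⊆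
      {Sum.inl v, Sum.inr (i+1), Sum.inr (i-1)} := by
    rintro x hx
    rcases x with b | j
    · have hadj : (cycleAttach G v m).Adj (Sum.inr i) (Sum.inl b) := hx
      have : b = v := ca_inl_inr.1 hadj.symm
      simp [this]
    · have hadj : (cycleAttach G v m).Adj (Sum.inr i) (Sum.inr j) := hx
      rcases (ca_inr_inr.1 hadj).2 with h | h
      · right; left; simp [h]
      · right; right
        simp only [Set.mem_singleton_iff, Sum.inr.injEq, eq_sub_iff_add_eq]
        exact h.symm
  refine (Set.ncard_le_ncard hsub (Set.toFinite _)).trans ?_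
  refine (Set.ncard_insert_le _ _).trans ?_
  have := Set.ncard_insert_le (Sum.inr (i+1) : α ⊕ Fin (m+1)) {Sum.inr (i-1)}
  simp only [Set.ncard_singleton] at this ⊢
  omega

/-- `G*` with `v` effectively deleted: `inl v` made isolated. -/
def pruned (G : SimpleGraph α) (v : α) (m : ℕ) : SimpleGraph (α ⊕ Fin (m + 1)) where
  Adj x y := (cycleAttach G v m).Adj x y ∧ x ≠ Sum.inl v ∧ y ≠ Sum.inl v
  symm := ⟨fun _ _ ⟨h, hx, hy⟩ => ⟨h.symm, hy, hx⟩⟩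
  loopless := ⟨fun x ⟨h, _, _⟩ => (cycleAttach G v m).irrefl h⟩

lemma pruned_adj_inr_succ (hm3 : 3 ≤ m) (i : Fin (m+1)) :
    (pruned G v m).Adj (Sum.inr i) (Sum.inr (i + 1)) := by
  refine ⟨ca_inr_inr.2 ⟨?_, Or.inl rfl⟩, by simp, by simp⟩
  intro h
  have h1 : (1 : Fin (m+1)) = 0 := add_left_cancel (a := i) (by simpa using h.symm)
  rw [Fin.one_eq_zero_iff] at h1
  omega

open Fin.NatCast in
lemma pruned_reach_inr (hm3 : 3 ≤ m) (i j : Fin (m+1)) :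
    (pruned G v m).Reachable (Sum.inr i) (Sum.inr j) := by
  have key : ∀ k : ℕ, (pruned G v m).Reachable (Sum.inr i) (Sum.inr (i + (k : Fin (m+1)))) := by
    intro k
    induction k with
    | zero => simpa using SimpleGraph.Reachable.refl _
    | succ k ih =>
        have : ((k+1 : ℕ) : Fin (m+1)) = (k : Fin (m+1)) + 1 := by push_cast; ring
        rw [this, ← add_assoc]
        exact ih.trans (pruned_adj_inr_succ hm3 _).reachable
  have := key (j - i).val
  rwa [Fin.cast_val_eq_self, add_sub_cancel] at this

lemma reach_walk_aux : ∀ {x y : α ⊕ Fin (m+1)}, (pruned G v m).Walk x y →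
    ∀ a : α, x = Sum.inl a → a ≠ v → ∃ b, b ≠ v ∧ y = Sum.inl b := by
  intro x y w
  induction w with
  | nil => exact fun a hx ha => ⟨a, ha, hx⟩
  | @cons u z y h p ih =>
      rintro a rfl ha
      rcases z with c | i
      · refine ih c rfl ?_
        intro hcv
        exact h.2.2 (by rw [hcv])
      · have hadj : (cycleAttach G v m).Adj (Sum.inl a) (Sum.inr i) := h.1
        exact absurd (ca_inl_inr.1 hadj) ha

/-- The set of vertices reachable from `x` in the pruned graph. -/
def reachSet (G : SimpleGraph α) (v : α) (m : ℕ) (x : α ⊕ Fin (m+1)) :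
    Set (α ⊕ Fin (m+1)) := {y | (pruned G v m).Reachable x y}

lemma reachSet_inr [Fintype α] (hm3 : 3 ≤ m) (i : Fin (m+1)) :
    m + 1 ≤ (reachSet G v m (Sum.inr i)).ncard := by
  have hsub : Set.range (Sum.inr : Fin (m+1) → α ⊕ Fin (m+1)) ⊆ reachSet G v m (Sum.inr i) := by
    rintro x ⟨j, rfl⟩
    exact pruned_reach_inr hm3 i j
  have := Set.ncard_le_ncard hsub (Set.toFinite _)
  rwa [ncard_range_inr] at this

lemma reachSet_inl [Fintype α] {a : α} (ha : a ≠ v) :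
    (reachSet G v m (Sum.inl a)).ncard ≤ Fintype.card α - 1 := by
  classical
  have hsub : reachSet G v m (Sum.inl a) ⊆ Sum.inl '' (Set.univ \ {v}) := by
    intro x hx
    obtain ⟨w⟩ := (hx : (pruned G v m).Reachable _ _)
    obtain ⟨b, hb, rfl⟩ := reach_walk_aux w a rfl ha
    exact ⟨b, ⟨trivial, hb⟩, rfl⟩
  refine (Set.ncard_le_ncard hsub (Set.toFinite _)).trans ?_
  rw [Set.ncard_image_of_injective _ Sum.inl_injective,
    Set.ncard_diff_singleton_of_mem (Set.mem_univ v), Set.ncard_univ]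
  simp

lemma iso_neighborSet_ncard {β : Type*} {H : SimpleGraph β} (φ : H ≃g H) (x : β) :
    (H.neighborSet (φ x)).ncard = (H.neighborSet x).ncard := by
  have himg : φ '' H.neighborSet x = H.neighborSet (φ x) := by
    ext y
    constructor
    · rintro ⟨z, hz, rfl⟩
      exact φ.map_adj_iff.2 hz
    · intro hy
      refine ⟨φ.symm y, ?_, by simp⟩
      have : H.Adj (φ x) (φ (φ.symm y)) := by simpa using hy
      exact φ.map_adj_iff.1 this
  rw [← himg, Set.ncard_image_of_injective _ φ.injective]

/-- Key lemma: every automorphism of `G*` fixes `inl v` and maps `inl` to `inl`. -/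
lemma key_lemma [Fintype α] (hm : m = Fintype.card α) (hm3 : 3 ≤ m)
    (φ : cycleAttach G v m ≃g cycleAttach G v m) :
    φ (Sum.inl v) = Sum.inl v ∧ ∀ a : α, ∃ b : α, φ (Sum.inl a) = Sum.inl b := by
  classical
  -- Step 1: φ fixes `inl v`, by degree counting.
  have hdeg : m + 1 ≤ ((cycleAttach G v m).neighborSet (φ (Sum.inl v))).ncard := by
    rw [iso_neighborSet_ncard]
    exact deg_v
  have hv : φ (Sum.inl v) = Sum.inl v := by
    rcases hx : φ (Sum.inl v) with a | i
    · by_contra hne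
      have ha : a ≠ v := by rintro rfl; exact hne rfl
      have := deg_inl (G := G) (m := m) ha
      rw [hx] at hdeg
      omega
    · have := deg_inr (G := G) (v := v) (i := i)
      rw [hx] at hdeg
      omega
  refine ⟨hv, ?_⟩
  -- Step 2: φ is an automorphism of the pruned graph.
  have hvx : ∀ x, φ x = Sum.inl v ↔ x = Sum.inl v := by
    intro x
    constructor
    · intro h; exact φ.injective (by rw [h, hv])
    · rintro rfl; exact hv
  let φH : pruned G v m ≃g pruned G v m :=
    { φ.toEquiv with
      map_rel_iff' := by
        intro x y
        show (pruned G v m).Adj (φ x) (φ y) ↔ (pruned G v m).Adj x y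
        constructor
        · rintro ⟨h, h1, h2⟩
          exact ⟨φ.map_adj_iff.1 h, fun hh => h1 ((hvx x).2 hh), fun hh => h2 ((hvx y).2 hh)⟩
        · rintro ⟨h, h1, h2⟩
          exact ⟨φ.map_adj_iff.2 h, fun hh => h1 ((hvx x).1 hh), fun hh => h2 ((hvx y).1 hh)⟩ }
  have hφH : ∀ x, (φH : α ⊕ Fin (m+1) → α ⊕ Fin (m+1)) x = φ x := fun _ => rfl
  -- reachSet is transported by φ
  have himg : ∀ x, φ '' reachSet G v m x = reachSet G v m (φ x) := by
    intro x
    ext y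
    constructor
    · rintro ⟨z, hz, rfl⟩
      have := SimpleGraph.Reachable.map φH.toHom (hz : (pruned G v m).Reachable x z)
      exact (by simpa [hφH] using this : (pruned G v m).Reachable (φ x) (φ z))
    · intro hy
      refine ⟨φ.symm y, ?_, by simp⟩
      have := SimpleGraph.Reachable.map φH.symm.toHom
        (hy : (pruned G v m).Reachable (φ x) y)
      have hsymm : (φH.symm : α ⊕ Fin (m+1) → α ⊕ Fin (m+1)) (φ x) = x := by
        show φ.symm (φ x) = x
        simp
      exact (by simpa [hsymm] using this : (pruned G v m).Reachable x (φH.symm y))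
  have hcard : ∀ x, (reachSet G v m (φ x)).ncard = (reachSet G v m x).ncard := by
    intro x
    rw [← himg, Set.ncard_image_of_injective _ φ.injective]
  -- Step 3: conclude.
  intro a
  rcases heq : φ (Sum.inl a) with b | j
  · exact ⟨b, rfl⟩
  · exfalso
    have ha : a ≠ v := by
      rintro rfl
      rw [hv] at heq
      exact Sum.inl_ne_inr heq
    have h1 := reachSet_inr (G := G) (v := v) hm3 j
    have h2 := reachSet_inl (G := G) (m := m) ha
    have h3 := hcard (Sum.inl a)
    rw [heq] at h3
    omega

end CycleAttachAux

/-- Every automorphism of `G*` (obtained by attaching a cycle of `m + 1` new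
vertices to `v`, all adjacent to `v`, where `m = |A| ≥ 3`) maps the original
vertex set to itself, fixes `v`, and restricts to an automorphism of `G`
fixing `v`; conversely every automorphism of `G` fixing `v` extends to `G*`. -/
theorem stmt17 {α : Type*} [Fintype α] {m : ℕ} (hm : m = Fintype.card α)
    (hm3 : 3 ≤ m) (G : SimpleGraph α) (v : α) :
    (∀ φ : cycleAttach G v m ≃g cycleAttach G v m,
      (∀ a : α, ∃ b : α, φ (Sum.inl a) = Sum.inl b) ∧
      φ (Sum.inl v) = Sum.inl v ∧
      ∃ ψ : G ≃g G, ψ v = v ∧ ∀ a : α, φ (Sum.inl a) = Sum.inl (ψ a)) ∧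
    (∀ ψ : G ≃g G, ψ v = v →
      ∃ φ : cycleAttach G v m ≃g cycleAttach G v m,
        ∀ a : α, φ (Sum.inl a) = Sum.inl (ψ a)) := by
  
  constructor
  · intro φ
    obtain ⟨hv, hmap⟩ := key_lemma hm hm3 φ
    obtain ⟨hv', hmap'⟩ := key_lemma hm hm3 φ.symm
    refine ⟨hmap, hv, ?_⟩
    set f : α → α := fun a => Sum.elim id (fun _ => v) (φ (Sum.inl a)) with hf_def
    set g : α → α := fun a => Sum.elim id (fun _ => v) (φ.symm (Sum.inl a)) with hg_def
    have hf : ∀ a, φ (Sum.inl a) = Sum.inl (f a) := by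
      intro a
      obtain ⟨b, hb⟩ := hmap a
      rw [hb]
      simp [hf_def, hb]
    have hg : ∀ a, φ.symm (Sum.inl a) = Sum.inl (g a) := by
      intro a
      obtain ⟨b, hb⟩ := hmap' a
      rw [hb]
      simp [hg_def, hb]
    have hgf : ∀ a, g (f a) = a := by
      intro a
      have : φ.symm (Sum.inl (f a)) = Sum.inl a := by rw [← hf]; simp
      rw [hg] at this
      exact Sum.inl_injective this
    have hfg : ∀ a, f (g a) = a := by
      intro a
      have : φ (Sum.inl (g a)) = Sum.inl a := by rw [← hg]; simp
      rw [hf] at this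
      exact Sum.inl_injective this
    have hfv : f v = v := Sum.inl_injective (by rw [← hf, hv])
    refine ⟨⟨⟨f, g, hgf, hfg⟩, ?_⟩, hfv, fun a => hf a⟩
    intro a b
    show G.Adj (f a) (f b) ↔ G.Adj a b
    rw [← ca_inl_inl (v := v) (m := m), ← ca_inl_inl (v := v) (m := m) (a := a),
      ← hf, ← hf]
    exact φ.map_adj_iff
  · intro ψ hψ
    have hψv : ∀ a, ψ a = v ↔ a = v := by
      intro a
      constructor
      · intro h; exact ψ.injective (by rw [h, hψ])
      · rintro rfl; exact hψ
    refine ⟨{ Equiv.sumCongr ψ.toEquiv (Equiv.refl _) with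
      map_rel_iff' := ?_ }, fun a => rfl⟩
    rintro (a | i) (b | j)
    · show (cycleAttach G v m).Adj (Sum.inl (ψ a)) (Sum.inl (ψ b)) ↔ _
      rw [ca_inl_inl, ca_inl_inl]
      exact ψ.map_adj_iff
    · show (cycleAttach G v m).Adj (Sum.inl (ψ a)) (Sum.inr j) ↔ _
      rw [ca_inl_inr, ca_inl_inr]
      exact hψv a
    · show (cycleAttach G v m).Adj (Sum.inr i) (Sum.inl (ψ b)) ↔ _
      rw [(cycleAttach G v m).adj_comm, (cycleAttach G v m).adj_comm _ (Sum.inl b),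
        ca_inl_inr, ca_inl_inr]
      exact hψv b
    · exact Iff.rfl
end
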